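/- arXiv:2301.00104 — 5 statements merged into one kernel-verified Lean document; each statement's English description precedes it below -/
import Mathlib

section
/- Fix n, τ ∈ ℕ, a set R ⊆ {0,1}^n, a type Π of proof strings, and a verifier V : ({0,1}^n → Bool) × Π → Bool with the property that whenever V(C, π) = 1, the set C⁻¹(1) has Hamming diameter at most τ (i.e., any z, z' ∈ {0,1}^n with C(z) = C(z') = 1 satisfy ‖z − z'‖₁ ≤ τ). Define the verifiable low-diameter-set utility u^VLDS : {0,1}^n × (({0,1}^n → Bool) × Π) → {0,1} by u^VLDS(x, (C, π)) = 1 iff V(C, π) = 1 and (C(x) = 1 or x ∉ R). If there exists an (ε, δ)-SDP mechanism M : {0,1}^n → PMF(({0,1}^n → Bool) × Π) that is α-useful for u^VLDS, then there exists an (ε, δ)-SDP mechanism M' : {0,1}^n → PMF({0,1}^n) that is α-useful for the nearby-point utility u^NBP_{τ,R}. -/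
open scoped ENNReal

/-- Probability that a sample from `p` lands in `S`. -/
noncomputable def pr {Y : Type*} (p : PMF Y) (S : Set Y) : ℝ :=
  (p.toOuterMeasure S).toReal

/-- `(ε, δ)`-statistical differential privacy for mechanisms on bit-vector datasets. -/
def IsSDP {ι : Type*} [Fintype ι] {Y : Type*}
    (M : (ι → Bool) → PMF Y) (ε δ : ℝ) : Prop :=
  ∀ x x' : ι → Bool, hammingDist x x' = 1 →
    ∀ S : Set Y, pr (M x) S ≤ Real.exp ε * pr (M x') S + δ

/-- If there is an `(ε, δ)`-SDP mechanism that is `α`-useful for the verifiable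
low-diameter-set utility, then there is an `(ε, δ)`-SDP mechanism that is `α`-useful
for the nearby-point utility. -/
theorem vlds_to_nbp {n τ : ℕ} (R : Set (Fin n → Bool)) (P : Type*)
    (V : ((Fin n → Bool) → Bool) × P → Bool)
    (hV : ∀ C : (Fin n → Bool) → Bool, ∀ π : P, V (C, π) = true →
      ∀ z z' : Fin n → Bool, C z = true → C z' = true → hammingDist z z' ≤ τ)
    (ε δ α : ℝ)
    (M : (Fin n → Bool) → PMF (((Fin n → Bool) → Bool) × P))
    (hSDP : IsSDP M ε δ)
    (hUseful : ∀ x : Fin n → Bool,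
      α ≤ pr (M x) {Cπ | V Cπ = true ∧ (Cπ.1 x = true ∨ x ∉ R)}) :
    ∃ M' : (Fin n → Bool) → PMF (Fin n → Bool),
      IsSDP M' ε δ ∧
      ∀ x : Fin n → Bool, α ≤ pr (M' x) {y | hammingDist x y ≤ τ ∨ x ∉ R} := by

  classical
  set f : ((Fin n → Bool) → Bool) × P → (Fin n → Bool) := fun Cπ =>
    if h : ∃ z, Cπ.1 z = true then h.choose else (fun _ => false) with hf
  refine ⟨fun x => (M x).map f, ?_, ?_⟩
  · intro x x' hx S
    have h1 : pr ((M x).map f) S = pr (M x) (f ⁻¹' S) := by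
      simp only [pr, PMF.toOuterMeasure_map_apply]
    have h2 : pr ((M x').map f) S = pr (M x') (f ⁻¹' S) := by
      simp only [pr, PMF.toOuterMeasure_map_apply]
    rw [h1, h2]
    exact hSDP x x' hx _
  · intro x
    have h1 : pr ((M x).map f) {y | hammingDist x y ≤ τ ∨ x ∉ R}
        = pr (M x) (f ⁻¹' {y | hammingDist x y ≤ τ ∨ x ∉ R}) := by
      simp only [pr, PMF.toOuterMeasure_map_apply]
    rw [h1]
    refine le_trans (hUseful x) ?_
    have hsub : {Cπ : ((Fin n → Bool) → Bool) × P | V Cπ = true ∧ (Cπ.1 x = true ∨ x ∉ R)}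
        ⊆ f ⁻¹' {y | hammingDist x y ≤ τ ∨ x ∉ R} := by
      rintro ⟨C, π⟩ ⟨hVC, hcase⟩
      rcases hcase with hCx | hxR
      · have hex : ∃ z, C z = true := ⟨x, hCx⟩
        simp only [Set.mem_preimage, Set.mem_setOf_eq, hf, dif_pos hex]
        exact Or.inl (hV C π hVC x hex.choose hCx hex.choose_spec)
      · exact Or.inr hxR
    have := (M x).toOuterMeasure.mono hsub
    unfold pr
    have hle1 : (M x).toOuterMeasure (f ⁻¹' {y | hammingDist x y ≤ τ ∨ x ∉ R}) ≤ 1 := by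
      calc (M x).toOuterMeasure (f ⁻¹' {y | hammingDist x y ≤ τ ∨ x ∉ R})
          ≤ (M x).toOuterMeasure Set.univ := (M x).toOuterMeasure.mono (Set.subset_univ _)
        _ = 1 := ((M x).toOuterMeasure_apply_eq_one_iff _).mpr (Set.subset_univ _)
    exact ENNReal.toReal_mono (ne_of_lt (lt_of_le_of_lt hle1 ENNReal.one_lt_top)) this
end

section
/- Let g : ℕ → ℝ≥0 satisfy g(n)/log n → 0 as n → ∞, let ε, α > 0 be constants, and for each n ∈ ℕ let τ_n be a natural number with τ_n ≤ n^{0.9} and R_n ⊆ {0,1}^n a set with |R_n| ≥ 2^n / n^{g(n)}. Then there exists N ∈ ℕ such that for all n ≥ N, no mechanism M : {0,1}^n → PMF({0,1}^n) that is (ε, n^{−27})-SDP is α-useful for the nearby-point utility u^NBP_{τ_n, R_n}. -/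
open scoped ENNReal NNReal

/-!
Suppose `M` is `α`-useful. For `x ∈ R` and a `k`-set `A` of coordinates, let `x ⊕ A` be `x`
flipped on `A`. The outputs within `τ` of `x` that agree with `x` on `A` lie within `τ + k` of
`x ⊕ A` and disagree with `x ⊕ A` on all of `A`; by group privacy over the `k` flips, `M (x ⊕ A)`
lands there with probability at least `e^{-εk}` times that of `M x`, up to `k δ`. Now double count
over the pairs `(x, A)`: an output near `x` agrees with `x` on at least `C(n - τ, k)` sets `A`,
while an output is within `τ + k` of `z` and disagrees with `z` on `A` for at most `C(τ + k, k)`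
sets `A`. Hence `α C(n - τ, k) |R| ≤ e^{εk} (2^n C(τ + k, k) + |R| C(n, k) k δ)`. With
`|R| ≥ 2^n / n^g` and `k ≈ 20 (g + 1) = o(log n)` this gives
`α ≤ n^g (2e^ε (τ + k) / n)^k + (2e^ε)^k k / n^27`. The first term is at most
`n^g n^{-0.05 k} ≤ 1 / n` because `τ + k = O(n^0.9)`, the second at most `1 / n` because
`(ε + 1) k ≤ log n`.
-/

open Finset Filter

lemma pr_mono {Y : Type*} (p : PMF Y) {S T : Set Y} (h : S ⊆ T) : pr p S ≤ pr p T :=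
  ENNReal.toReal_mono (by rw [PMF.toOuterMeasure_apply]; exact p.tsum_coe_indicator_ne_top T)
    (p.toOuterMeasure.mono h)

section Probability

variable {Y : Type*} [Fintype Y]

lemma pr_eq_sum (p : PMF Y) (S : Set Y) :
    pr p S = ∑ y, S.indicator (fun y => (p y).toReal) y := by
  rw [pr, PMF.toOuterMeasure_apply_fintype, ENNReal.toReal_sum]
  · exact sum_congr rfl fun y _ =>
      (congrFun (S.indicator_comp_of_zero (f := p) ENNReal.toReal_zero) y).symm
  · intro y _
    by_cases hy : y ∈ S <;> simp [hy, p.apply_ne_top]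

lemma PMF.sum_toReal_eq_one (p : PMF Y) : ∑ y, (p y).toReal = 1 := by
  rw [← ENNReal.toReal_sum fun y _ => p.apply_ne_top y, ← tsum_fintype (L := .unconditional _),
    p.tsum_coe, ENNReal.toReal_one]

variable [DecidableEq Y] {κ : Type*} (p : PMF Y) (F : Finset κ) (T : κ → Finset Y)

lemma sum_pr_eq_sum_mul_card :
    ∑ A ∈ F, pr p ↑(T A) = ∑ y, (p y).toReal * #{A ∈ F | y ∈ T A} := by
  simp_rw [pr_eq_sum, Set.indicator_apply, mem_coe]
  rw [sum_comm]
  refine sum_congr rfl fun y _ => ?_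
  rw [← sum_filter, sum_const, nsmul_eq_mul, mul_comm]

lemma mul_pr_le_sum_pr {S : Set Y} {c : ℕ} (hc : ∀ y ∈ S, c ≤ #{A ∈ F | y ∈ T A}) :
    c * pr p S ≤ ∑ A ∈ F, pr p ↑(T A) := by
  rw [sum_pr_eq_sum_mul_card, pr_eq_sum, mul_sum]
  refine sum_le_sum fun y _ => ?_
  by_cases hy : y ∈ S
  · rw [Set.indicator_of_mem hy, mul_comm]
    exact mul_le_mul_of_nonneg_left (by exact_mod_cast hc y hy) ENNReal.toReal_nonneg
  · rw [Set.indicator_of_notMem hy, mul_zero]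
    positivity

lemma sum_pr_le {c : ℕ} (hc : ∀ y, #{A ∈ F | y ∈ T A} ≤ c) : ∑ A ∈ F, pr p ↑(T A) ≤ c :=
  calc ∑ A ∈ F, pr p ↑(T A) ≤ ∑ y, (p y).toReal * c := by
        rw [sum_pr_eq_sum_mul_card]
        exact sum_le_sum fun y _ =>
          mul_le_mul_of_nonneg_left (by exact_mod_cast hc y) ENNReal.toReal_nonneg
    _ = c := by rw [← sum_mul, p.sum_toReal_eq_one, one_mul]

end Probability

section Hamming

variable {ι : Type*} [Fintype ι]

lemma exists_hammingDist_eq_one_of_ne [DecidableEq ι] {β : ι → Type*} [∀ i, DecidableEq (β i)]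
    {x x' : ∀ i, β i} (h : x ≠ x') :
    ∃ x'', hammingDist x x'' = 1 ∧ hammingDist x'' x' + 1 = hammingDist x x' := by
  obtain ⟨i, hi⟩ := Function.ne_iff.mp h
  refine ⟨Function.update x i (x' i), ?_, ?_⟩
  · rw [hammingDist, card_eq_one]
    refine ⟨i, ext fun j => ?_⟩
    by_cases hj : j = i
    · subst hj; simp [hi]
    · simp [hj]
  · have : ({j | Function.update x i (x' i) j ≠ x' j} : Finset ι) =
        ({j | x j ≠ x' j} : Finset ι).erase i := by
      ext j
      by_cases hj : j = i
      · subst hj; simp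
      · simp [hj]
    rw [hammingDist, hammingDist, this, card_erase_add_one (by simpa using hi)]

lemma card_filter_eq_sub_hammingDist (x y : ι → Bool) :
    #{i | y i = x i} = Fintype.card ι - hammingDist x y := by
  rw [hammingDist, ← card_univ,
    ← card_filter_add_card_filter_not (s := univ) (fun i => y i = x i)]
  simp [ne_comm]

end Hamming

theorem IsSDP.pr_le_of_hammingDist_le {ι Y : Type*} [Fintype ι] {M : (ι → Bool) → PMF Y}
    {ε δ : ℝ} (hM : IsSDP M ε δ) (hε : 0 ≤ ε) (hδ : 0 ≤ δ) {d : ℕ} {x x' : ι → Bool}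
    (h : hammingDist x x' ≤ d) (S : Set Y) :
    pr (M x) S ≤ Real.exp (ε * d) * (pr (M x') S + d * δ) := by
  classical
  induction d generalizing x with
  | zero => simp [hammingDist_eq_zero.mp (Nat.le_zero.mp h)]
  | succ d ih =>
    have hpr : 0 ≤ pr (M x') S := ENNReal.toReal_nonneg
    have hexp : 1 ≤ Real.exp (ε * (d + 1 : ℕ)) := Real.one_le_exp (by positivity)
    by_cases hxx : x = x'
    · subst hxx
      exact (le_add_of_nonneg_right (by positivity)).trans
        (le_mul_of_one_le_left (by positivity) hexp)
    obtain ⟨x'', hxx'', hx''x'⟩ := exists_hammingDist_eq_one_of_ne hxx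
    calc pr (M x) S ≤ Real.exp ε * pr (M x'') S + δ := hM x x'' hxx'' S
      _ ≤ Real.exp ε * (Real.exp (ε * d) * (pr (M x') S + d * δ)) + δ := by
          gcongr; exact ih (by omega)
      _ = Real.exp (ε * (d + 1 : ℕ)) * (pr (M x') S + d * δ) + δ := by
          rw [← mul_assoc, ← Real.exp_add]; push_cast; ring_nf
      _ ≤ Real.exp (ε * (d + 1 : ℕ)) * (pr (M x') S + (d + 1 : ℕ) * δ) := by
          have := le_mul_of_one_le_left hδ hexp
          push_cast at this ⊢
          linarith

section Flip

variable {ι : Type*} [DecidableEq ι]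

def flipOn (A : Finset ι) (x : ι → Bool) : ι → Bool :=
  fun i => if i ∈ A then !x i else x i

lemma flipOn_involutive (A : Finset ι) : Function.Involutive (flipOn A) := by
  intro x
  funext i
  by_cases hi : i ∈ A <;> simp [flipOn, hi]

variable [Fintype ι]

lemma hammingDist_flipOn (A : Finset ι) (x : ι → Bool) :
    hammingDist x (flipOn A x) = #A := by
  rw [hammingDist]
  congr 1
  ext i
  by_cases hi : i ∈ A <;> simp [flipOn, hi]

lemma filter_powersetCard_univ_subset (k : ℕ) (t : Finset ι) :
    {A ∈ powersetCard k (univ : Finset ι) | A ⊆ t} = powersetCard k t := by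
  ext A
  simp [mem_powersetCard, and_comm]

def agreeBall (x : ι → Bool) (r : ℕ) (A : Finset ι) : Finset (ι → Bool) :=
  {y | hammingDist x y ≤ r ∧ A ⊆ ({i | y i = x i} : Finset ι)}

def disagreeBall (z : ι → Bool) (r : ℕ) (A : Finset ι) : Finset (ι → Bool) :=
  {y | hammingDist z y ≤ r ∧ A ⊆ ({i | z i ≠ y i} : Finset ι)}

lemma card_filter_mem_agreeBall {x y : ι → Bool} {r : ℕ} (hy : hammingDist x y ≤ r) (k : ℕ) :
    #{A ∈ powersetCard k univ | y ∈ agreeBall x r A} =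
      (Fintype.card ι - hammingDist x y).choose k := by
  simp only [agreeBall, mem_filter, mem_univ, true_and, hy]
  rw [filter_powersetCard_univ_subset, card_powersetCard, card_filter_eq_sub_hammingDist]

lemma card_filter_mem_disagreeBall_le (z y : ι → Bool) (r k : ℕ) :
    #{A ∈ powersetCard k univ | y ∈ disagreeBall z r A} ≤ r.choose k := by
  by_cases hy : hammingDist z y ≤ r
  · simp only [disagreeBall, mem_filter, mem_univ, true_and, hy]
    rw [filter_powersetCard_univ_subset, card_powersetCard]
    exact Nat.choose_le_choose k hy
  · simp [disagreeBall, hy]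

lemma agreeBall_subset_disagreeBall_flipOn (x : ι → Bool) (r : ℕ)
    (A : Finset ι) : agreeBall x r A ⊆ disagreeBall (flipOn A x) (r + #A) A := by
  intro y hy
  simp only [agreeBall, disagreeBall, mem_filter, mem_univ, true_and, subset_iff] at hy ⊢
  refine ⟨?_, fun i hi => ?_⟩
  · calc hammingDist (flipOn A x) y ≤ hammingDist (flipOn A x) x + hammingDist x y :=
          hammingDist_triangle _ _ _
      _ ≤ r + #A := by rw [hammingDist_comm, hammingDist_flipOn]; omega
  · simp [flipOn, hi, hy.2 hi]

end Flip

theorem IsSDP.mul_choose_mul_card_le {ι : Type*} [Fintype ι] {M : (ι → Bool) → PMF (ι → Bool)}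
    {ε δ α : ℝ} (hM : IsSDP M ε δ) (hε : 0 ≤ ε) (hδ : 0 ≤ δ) (R : Finset (ι → Bool)) (τ k : ℕ)
    (huseful : ∀ x ∈ R, α ≤ pr (M x) {y | hammingDist x y ≤ τ}) :
    α * (Fintype.card ι - τ).choose k * #R ≤
      Real.exp (ε * k) * (2 ^ Fintype.card ι * (τ + k).choose k
        + #R * (Fintype.card ι).choose k * (k * δ)) := by
  classical
  set 𝒜 := powersetCard k (univ : Finset ι)
  set bad := fun (x : ι → Bool) (A : Finset ι) =>
    pr (M (flipOn A x)) (disagreeBall (flipOn A x) (τ + k) A)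
  have hgood (x) (hx : x ∈ R) :
      α * (Fintype.card ι - τ).choose k ≤ ∑ A ∈ 𝒜, pr (M x) (agreeBall x τ A) := by
    rw [mul_comm]
    refine (mul_le_mul_of_nonneg_left (huseful x hx) (Nat.cast_nonneg _)).trans
      (mul_pr_le_sum_pr _ _ _ fun y hy => ?_)
    rw [card_filter_mem_agreeBall hy]
    exact Nat.choose_le_choose k (Nat.sub_le_sub_left hy _)
  have hflip (x) (A) (hA : A ∈ 𝒜) :
      pr (M x) (agreeBall x τ A) ≤ Real.exp (ε * k) * (bad x A + k * δ) := by
    have hAk : #A = k := (mem_powersetCard.mp hA).2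
    calc pr (M x) (agreeBall x τ A)
        ≤ Real.exp (ε * k) * (pr (M (flipOn A x)) (agreeBall x τ A) + k * δ) :=
          hM.pr_le_of_hammingDist_le hε hδ (hammingDist_flipOn A x ▸ hAk.le) _
      _ ≤ Real.exp (ε * k) * (bad x A + k * δ) := by
          gcongr
          exact pr_mono _ (hAk ▸ coe_subset.mpr (agreeBall_subset_disagreeBall_flipOn x τ A))
  have hbad : ∑ x ∈ R, ∑ A ∈ 𝒜, bad x A ≤ 2 ^ Fintype.card ι * (τ + k).choose k := by
    rw [sum_comm]
    calc ∑ A ∈ 𝒜, ∑ x ∈ R, bad x A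
        ≤ ∑ A ∈ 𝒜, ∑ z, pr (M z) (disagreeBall z (τ + k) A) := by
          refine sum_le_sum fun A _ => ?_
          exact (sum_le_univ_sum_of_nonneg fun _ => ENNReal.toReal_nonneg).trans_eq
            (Equiv.sum_comp (flipOn_involutive A).toPerm
              fun z => pr (M z) (disagreeBall z (τ + k) A))
      _ = ∑ z, ∑ A ∈ 𝒜, pr (M z) (disagreeBall z (τ + k) A) := sum_comm
      _ ≤ ∑ _z : ι → Bool, ((τ + k).choose k : ℝ) :=
          sum_le_sum fun z _ => sum_pr_le _ _ _ fun y => card_filter_mem_disagreeBall_le z y _ k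
      _ = 2 ^ Fintype.card ι * (τ + k).choose k := by simp
  calc α * (Fintype.card ι - τ).choose k * #R
      = ∑ _x ∈ R, α * (Fintype.card ι - τ).choose k := by rw [sum_const, nsmul_eq_mul, mul_comm]
    _ ≤ ∑ x ∈ R, ∑ A ∈ 𝒜, Real.exp (ε * k) * (bad x A + k * δ) :=
        sum_le_sum fun x hx => (hgood x hx).trans (sum_le_sum fun A hA => hflip x A hA)
    _ = Real.exp (ε * k) *
          (∑ x ∈ R, ∑ A ∈ 𝒜, bad x A + #R * (Fintype.card ι).choose k * (k * δ)) := by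
        have h𝒜 : #𝒜 = (Fintype.card ι).choose k := by simp [𝒜]
        simp only [← mul_sum, sum_add_distrib, sum_const, nsmul_eq_mul, h𝒜]
        ring
    _ ≤ _ := by gcongr

theorem IsSDP.mul_pow_le {ι : Type*} [Fintype ι] {M : (ι → Bool) → PMF (ι → Bool)}
    {ε δ α g : ℝ} (hM : IsSDP M ε δ) (hε : 0 ≤ ε) (hδ : 0 ≤ δ) (hα : 0 ≤ α)
    {R : Finset (ι → Bool)} (hR : 2 ^ Fintype.card ι ≤ #R * (Fintype.card ι : ℝ) ^ g) (τ k : ℕ)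
    (huseful : ∀ x ∈ R, α ≤ pr (M x) {y | hammingDist x y ≤ τ}) :
    α * ((Fintype.card ι - τ + 1 - k : ℕ) : ℝ) ^ k ≤
      Real.exp (ε * k) * ((Fintype.card ι : ℝ) ^ g * ((τ + k : ℕ) : ℝ) ^ k
        + k * δ * (Fintype.card ι : ℝ) ^ k) := by
  set n := Fintype.card ι
  have hR0 : (0 : ℝ) < #R :=
    pos_of_mul_pos_left ((by positivity : (0 : ℝ) < 2 ^ n).trans_le hR) (by positivity)
  have hscale : (0 : ℝ) < #R / k.factorial := by positivity
  have hlow := Nat.pow_le_choose (α := ℝ) k (n - τ)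
  have hup₁ := Nat.choose_le_pow_div (α := ℝ) k (τ + k)
  have hup₂ := Nat.choose_le_pow_div (α := ℝ) k n
  refine le_of_mul_le_mul_right ?_ hscale
  calc α * ((n - τ + 1 - k : ℕ) : ℝ) ^ k * (#R / k.factorial)
      = α * (((n - τ + 1 - k : ℕ) : ℝ) ^ k / k.factorial) * #R := by ring
    _ ≤ α * (n - τ).choose k * #R := by gcongr
    _ ≤ Real.exp (ε * k) * (2 ^ n * (τ + k).choose k + #R * n.choose k * (k * δ)) :=
        hM.mul_choose_mul_card_le hε hδ R τ k huseful
    _ ≤ Real.exp (ε * k) * (#R * (n : ℝ) ^ g * (((τ + k : ℕ) : ℝ) ^ k / k.factorial)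
          + #R * ((n : ℝ) ^ k / k.factorial) * (k * δ)) := by gcongr
    _ = Real.exp (ε * k) * ((n : ℝ) ^ g * ((τ + k : ℕ) : ℝ) ^ k + k * δ * (n : ℝ) ^ k)
          * (#R / k.factorial) := by ring

lemma exp_mul_rpow_mul_pow_le {x g ε t : ℝ} {k : ℕ} (hx : 1 ≤ x) (ht0 : 0 ≤ t)
    (ht : t ≤ 2 * x ^ (0.9 : ℝ)) (hk : 20 * (g + 1) ≤ k) (hε : 4 * Real.exp ε ≤ x ^ (0.05 : ℝ)) :
    Real.exp (ε * k) * (x ^ g * t ^ k) ≤ (x / 2) ^ k / x := by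
  have hx0 : 0 < x := by linarith
  set u := x ^ (0.05 : ℝ)
  have hu : 0 < u := by positivity
  have hsplit : x ^ (0.9 : ℝ) * u = x / u := by
    rw [eq_div_iff hu.ne', mul_assoc, ← Real.rpow_add hx0, ← Real.rpow_add hx0]
    norm_num
  have hbase : Real.exp ε * t ≤ x / (2 * u) := by
    calc Real.exp ε * t ≤ Real.exp ε * (2 * x ^ (0.9 : ℝ)) := by gcongr
      _ ≤ u / 4 * (2 * x ^ (0.9 : ℝ)) := by gcongr; linarith
      _ = x / (2 * u) := by rw [div_mul_eq_div_div_swap, ← hsplit]; field_simp; ring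
  have hexp : x ^ g / u ^ k ≤ x⁻¹ := by
    rw [← Real.rpow_mul_natCast hx0.le, ← Real.rpow_sub hx0, ← Real.rpow_neg_one]
    exact Real.rpow_le_rpow_of_exponent_le hx (by linarith)
  calc Real.exp (ε * k) * (x ^ g * t ^ k) = x ^ g * (Real.exp ε * t) ^ k := by
        rw [mul_pow, mul_comm ε, Real.exp_nat_mul]; ring
    _ ≤ x ^ g * (x / (2 * u)) ^ k := by gcongr
    _ = (x / 2) ^ k * (x ^ g / u ^ k) := by rw [div_mul_eq_div_div, div_pow]; ring
    _ ≤ (x / 2) ^ k / x := by rw [div_eq_mul_inv _ x]; gcongr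

lemma exp_mul_mul_pow_div_pow_le {x ε : ℝ} {k : ℕ} (hx : 1 ≤ x) (hkx : k ≤ x)
    (hk : (ε + 1) * k ≤ Real.log x) :
    Real.exp (ε * k) * (k * (1 / x ^ 27) * x ^ k) ≤ (x / 2) ^ k / x := by
  have hx0 : 0 < x := by linarith
  have h2exp : (2 * Real.exp ε) ^ k ≤ x := by
    calc (2 * Real.exp ε) ^ k ≤ (Real.exp 1 * Real.exp ε) ^ k := by
          gcongr; linarith [Real.add_one_le_exp 1]
      _ = Real.exp ((ε + 1) * k) := by rw [← Real.exp_add, ← Real.exp_nat_mul]; ring_nf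
      _ ≤ x := by rw [← Real.exp_log hx0]; exact Real.exp_le_exp.mpr hk
  calc Real.exp (ε * k) * (k * (1 / x ^ 27) * x ^ k)
      = (2 * Real.exp ε) ^ k * k / x ^ 27 * (x / 2) ^ k := by
        rw [mul_comm ε, Real.exp_nat_mul, mul_pow, div_pow]; field_simp
    _ ≤ x * x / x ^ 27 * (x / 2) ^ k := by gcongr
    _ ≤ 1 / x * (x / 2) ^ k := by
        gcongr ?_ * _
        rw [div_le_div_iff₀ (by positivity) hx0, one_mul]
        calc x * x * x = x ^ 3 := by ring
          _ ≤ x ^ 27 := pow_le_pow_right₀ hx (by norm_num)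
    _ = (x / 2) ^ k / x := by ring

lemma le_two_div_of_mul_pow_le {n τ k : ℕ} {g ε α : ℝ} (hn : 0 < n) (hε0 : 0 ≤ ε) (hα : 0 ≤ α)
    (hτ : (τ : ℝ) ≤ (n : ℝ) ^ (0.9 : ℝ)) (hlog : Real.log n ≤ (n : ℝ) ^ (0.9 : ℝ))
    (hk : 20 * (g + 1) ≤ k) (hkε : (ε + 1) * k ≤ Real.log n)
    (hε : 4 * Real.exp ε ≤ (n : ℝ) ^ (0.05 : ℝ))
    (h : α * ((n - τ + 1 - k : ℕ) : ℝ) ^ k ≤ Real.exp (ε * k) *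
      ((n : ℝ) ^ g * ((τ + k : ℕ) : ℝ) ^ k + k * (1 / (n : ℝ) ^ 27) * (n : ℝ) ^ k)) :
    α ≤ 2 / n := by
  set x := (n : ℝ)
  have hx : 1 ≤ x := Nat.one_le_cast.mpr hn
  have hx0 : 0 < x := by linarith
  have hkx : (k : ℝ) ≤ x ^ (0.9 : ℝ) := by nlinarith [(Nat.cast_nonneg k : (0 : ℝ) ≤ k)]
  have h4 : 4 * x ^ (0.9 : ℝ) ≤ x := by
    have hu : 4 ≤ x ^ (0.05 : ℝ) := le_trans (by linarith [Real.one_le_exp hε0]) hε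
    calc 4 * x ^ (0.9 : ℝ) ≤ x ^ (0.05 : ℝ) * x ^ (0.05 : ℝ) * x ^ (0.9 : ℝ) := by
          have : 0 < x ^ (0.9 : ℝ) := by positivity
          gcongr; nlinarith
      _ = x := by rw [← Real.rpow_add hx0, ← Real.rpow_add hx0]; norm_num
  have ht : ((τ + k : ℕ) : ℝ) ≤ 2 * x ^ (0.9 : ℝ) := by push_cast; linarith
  have hm : x / 2 ≤ ((n - τ + 1 - k : ℕ) : ℝ) := by
    have : τ + k ≤ n := Nat.cast_le.mp (show ((τ + k : ℕ) : ℝ) ≤ x by linarith)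
    rw [Nat.cast_sub (by omega), Nat.cast_add, Nat.cast_sub (by omega)]
    push_cast at ht ⊢
    linarith
  refine le_of_mul_le_mul_right ?_ (by positivity : 0 < (x / 2) ^ k)
  calc α * (x / 2) ^ k ≤ α * ((n - τ + 1 - k : ℕ) : ℝ) ^ k := by gcongr
    _ ≤ _ := h
    _ ≤ (x / 2) ^ k / x + (x / 2) ^ k / x := by
        rw [mul_add]
        exact add_le_add (exp_mul_rpow_mul_pow_le hx (Nat.cast_nonneg _) ht hk hε)
          (exp_mul_mul_pow_div_pow_le hx (by linarith) hkε)
    _ = 2 / x * (x / 2) ^ k := by ring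

lemma eventually_mul_ceil_le_log {g : ℕ → ℝ≥0}
    (hg : Tendsto (fun n : ℕ => (g n : ℝ) / Real.log n) atTop (nhds 0)) {c : ℝ} (hc : 0 < c) :
    ∀ᶠ n : ℕ in atTop, c * ⌈20 * ((g n : ℝ) + 1)⌉₊ ≤ Real.log n := by
  have hlog : Tendsto (fun n : ℕ => Real.log n) atTop atTop :=
    Real.tendsto_log_atTop.comp tendsto_natCast_atTop_atTop
  filter_upwards [hg.eventually_lt_const (by positivity : (0 : ℝ) < 1 / (40 * c)),
    hlog.eventually_ge_atTop (42 * c)] with n hgn hn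
  have hL : 0 < Real.log n := by linarith
  rw [div_lt_iff₀ hL, div_mul_eq_mul_div, one_mul, lt_div_iff₀ (by positivity)] at hgn
  have hceil := Nat.ceil_lt_add_one (by positivity : 0 ≤ 20 * ((g n : ℝ) + 1))
  calc c * ⌈20 * ((g n : ℝ) + 1)⌉₊ ≤ c * (20 * ((g n : ℝ) + 1) + 1) := by gcongr
    _ ≤ Real.log n := by linarith

/-- No `(ε, n^{-27})`-SDP mechanism is `α`-useful for the nearby-point problem
`u^NBP_{τ_n, R_n}` with `τ_n ≤ n^{0.9}` and `|R_n| ≥ 2^n / n^{g(n)}` for `g(n) = o(log n)`,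
for all sufficiently large `n`. -/
theorem no_sdp_for_nbp (g : ℕ → ℝ≥0)
    (hg : Filter.Tendsto (fun n : ℕ => (g n : ℝ) / Real.log n) Filter.atTop (nhds 0))
    (ε α : ℝ) (hε : 0 < ε) (hα : 0 < α)
    (τ : ℕ → ℕ) (hτ : ∀ n : ℕ, (τ n : ℝ) ≤ (n : ℝ) ^ (0.9 : ℝ))
    (R : (n : ℕ) → Finset (Fin n → Bool))
    (hR : ∀ n : ℕ, (2 : ℝ) ^ n / (n : ℝ) ^ ((g n : ℝ)) ≤ ((R n).card : ℝ)) :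
    ∃ N : ℕ, ∀ n ≥ N,
      ∀ M : (Fin n → Bool) → PMF (Fin n → Bool),
        IsSDP M ε (1 / (n : ℝ) ^ (27 : ℕ)) →
        ¬ (∀ x : Fin n → Bool,
            α ≤ pr (M x) {y | hammingDist x y ≤ τ n ∨ x ∉ (R n : Set (Fin n → Bool))}) := by
  have hcast := tendsto_natCast_atTop_atTop (R := ℝ)
  have hlog : ∀ᶠ x : ℝ in atTop, Real.log x ≤ x ^ (0.9 : ℝ) := by
    filter_upwards [(isLittleO_log_rpow_atTop (by norm_num : (0 : ℝ) < 0.9)).eventuallyLE,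
      eventually_ge_atTop 0] with x h hx
    simpa [abs_of_nonneg (Real.rpow_nonneg hx _)] using (le_abs_self _).trans h
  have hroot := (tendsto_rpow_atTop (by norm_num : (0 : ℝ) < 0.05)).comp hcast
  obtain ⟨N, hN⟩ := eventually_atTop.mp <|
    (eventually_mul_ceil_le_log hg (c := ε + 1) (by linarith)).and <|
    (hcast.eventually hlog).and <| (hroot.eventually_ge_atTop (4 * Real.exp ε)).and <|
    ((tendsto_const_div_atTop_nhds_zero_nat 2).eventually_lt_const hα).and (eventually_gt_atTop 0)
  refine ⟨N, fun n hn M hM huseful => ?_⟩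
  obtain ⟨hkε, hlogn, hεn, hαn, hn0⟩ := hN n hn
  have hRn : 2 ^ n ≤ #(R n) * (n : ℝ) ^ (g n : ℝ) :=
    (div_le_iff₀ (by positivity)).mp (hR n)
  have hball (x) (hx : x ∈ R n) : α ≤ pr (M x) {y | hammingDist x y ≤ τ n} := by
    simpa [hx] using huseful x
  have hbound := hM.mul_pow_le hε.le (by positivity) hα.le (by simpa using hRn) (τ n)
    ⌈20 * ((g n : ℝ) + 1)⌉₊ hball
  simp only [Fintype.card_fin] at hbound
  exact hαn.not_ge (le_two_div_of_mul_pow_le hn0 hε.le hα.le (hτ n) hlogn (Nat.le_ceil _) hkε hεn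
    hbound)
end

section
/- Let n, d ∈ ℕ and R ⊆ {0,1}^n. Then there exist an m ∈ ℕ with m ≥ (|R| − 2^n / ∑_{i=0}^{d} C(n, i)) / 2 and pairs (x¹, x̃¹), …, (x^m, x̃^m) of elements of R such that the 2m points x¹, x̃¹, …, x^m, x̃^m are pairwise distinct and ‖x^i − x̃^i‖₁ ≤ 2d + 1 for every i ∈ {1, …, m}. (In other words, the graph on R joining points at Hamming distance at most 2d + 1 contains a matching of size at least (|R| − 2^n / ∑_{i=0}^{d} C(n, i)) / 2.) -/
open Finset

lemma sphere_card {n : ℕ} (x : Fin n → Bool) (i : ℕ) :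
    (univ.filter (fun y : Fin n → Bool => hammingDist x y = i)).card = n.choose i := by
  have hp : (Finset.powersetCard i (univ : Finset (Fin n))).card = n.choose i := by
    rw [Finset.card_powersetCard, Finset.card_univ, Fintype.card_fin]
  rw [← hp]
  apply Finset.card_bij (fun y _ => univ.filter (fun j => x j ≠ y j))
  · intro y hy
    simp only [mem_filter, mem_univ, true_and] at hy
    simp [Finset.mem_powersetCard, ← hy, hammingDist]
  · intro a ha b hb hab
    simp only [mem_filter, mem_univ, true_and] at ha hb
    funext j
    have := Finset.ext_iff.mp hab j
    simp only [mem_filter, mem_univ, true_and] at this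
    by_cases h : x j = a j
    · by_cases h' : x j = b j
      · rw [← h, ← h']
      · exact absurd (this.mpr h') (by rw [h]; simp)
    · have h' := this.mp h
      cases hx : x j <;> cases hA : a j <;> cases hB : b j <;> simp_all
  · intro s hs
    refine ⟨fun j => if j ∈ s then !x j else x j, ?_, ?_⟩
    · simp only [mem_filter, mem_univ, true_and, hammingDist]
      rw [Finset.mem_powersetCard] at hs
      rw [← hs.2]
      congr 1
      ext j
      by_cases h : j ∈ s <;> simp [h]
    · ext j
      by_cases h : j ∈ s <;> simp [h]

lemma ball_card {n : ℕ} (x : Fin n → Bool) (d : ℕ) :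
    (univ.filter (fun y : Fin n → Bool => hammingDist x y ≤ d)).card
      = ∑ i ∈ range (d + 1), n.choose i := by
  have : (univ.filter (fun y : Fin n → Bool => hammingDist x y ≤ d))
      = (range (d+1)).biUnion (fun i => univ.filter (fun y => hammingDist x y = i)) := by
    ext y
    simp [Nat.lt_succ_iff]
  rw [this, Finset.card_biUnion, ]
  · exact Finset.sum_congr rfl fun i _ => sphere_card x i
  · intro a _ b _ hab
    simp only [Finset.disjoint_left, mem_filter]
    rintro y ⟨_, h1⟩ ⟨_, h2⟩
    exact hab (h1 ▸ h2 ▸ rfl)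

lemma packing {n d : ℕ} (R : Finset (Fin n → Bool))
    (h : ∀ u ∈ R, ∀ v ∈ R, u ≠ v → ¬ hammingDist u v ≤ 2 * d + 1) :
    R.card * ∑ i ∈ range (d + 1), n.choose i ≤ 2 ^ n := by
  calc R.card * ∑ i ∈ range (d + 1), n.choose i
      = ∑ x ∈ R, (univ.filter (fun y : Fin n → Bool => hammingDist x y ≤ d)).card := by
        rw [Finset.sum_congr rfl (fun x _ => ball_card x d), Finset.sum_const, smul_eq_mul]
    _ = (R.biUnion (fun x => univ.filter (fun y : Fin n → Bool => hammingDist x y ≤ d))).card := by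
        rw [Finset.card_biUnion]
        intro u hu v hv huv
        simp only [Finset.disjoint_left, mem_filter, mem_univ, true_and]
        intro y h1 h2
        refine h u hu v hv huv ?_
        calc hammingDist u v ≤ hammingDist u y + hammingDist v y := hammingDist_triangle_right _ _ _
          _ ≤ 2 * d + 1 := by omega
    _ ≤ (univ : Finset (Fin n → Bool)).card := Finset.card_le_card (Finset.subset_univ _)
    _ = 2 ^ n := by simp [Finset.card_univ]

lemma extend_inj {m : ℕ} {X : Type*} (x xt : Fin m → X) (u v : X)
    (hinj : Function.Injective (fun p : Fin m × Bool => if p.2 then x p.1 else xt p.1))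
    (hu : ∀ i, u ≠ x i ∧ u ≠ xt i) (hv : ∀ i, v ≠ x i ∧ v ≠ xt i) (huv : u ≠ v) :
    Function.Injective (fun p : Fin (m + 1) × Bool =>
      if p.2 then (Fin.cons u x : Fin (m+1) → X) p.1
      else (Fin.cons v xt : Fin (m+1) → X) p.1) := by
  rintro ⟨i, bi⟩ ⟨j, bj⟩ hij
  simp only at hij
  induction i using Fin.cases with
  | zero =>
    induction j using Fin.cases with
    | zero =>
      cases bi <;> cases bj <;> simp_all [Fin.cons]
    | succ j =>
      cases bi <;> cases bj <;> simp only [Fin.cons_zero, Fin.cons_succ,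
        if_true, if_false, Bool.false_eq_true] at hij
      · exact absurd hij (hv j).2
      · exact absurd hij (hv j).1
      · exact absurd hij (hu j).2
      · exact absurd hij (hu j).1
  | succ i =>
    induction j using Fin.cases with
    | zero =>
      cases bi <;> cases bj <;> simp only [Fin.cons_zero, Fin.cons_succ,
        if_true, if_false, Bool.false_eq_true] at hij
      · exact absurd hij.symm (hv i).2
      · exact absurd hij.symm (hu i).2
      · exact absurd hij.symm (hv i).1
      · exact absurd hij.symm (hu i).1
    | succ j =>
      have : (if bi then x i else xt i) = (if bj then x j else xt j) := by
        cases bi <;> cases bj <;> simpa [Fin.cons] using hij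
      have h2 := hinj (a₁ := (i, bi)) (a₂ := (j, bj)) this
      simp only [Prod.mk.injEq] at h2
      simp [h2.1, h2.2]

lemma aux {n d : ℕ} : ∀ (N : ℕ) (R : Finset (Fin n → Bool)), R.card ≤ N →
    ∃ (m : ℕ) (x xt : Fin m → (Fin n → Bool)),
      (∀ i : Fin m, x i ∈ R ∧ xt i ∈ R) ∧
      (∀ i : Fin m, hammingDist (x i) (xt i) ≤ 2 * d + 1) ∧
      Function.Injective (fun p : Fin m × Bool => if p.2 then x p.1 else xt p.1) ∧
      (R.card - 2 * m) * ∑ i ∈ range (d + 1), n.choose i ≤ 2 ^ n := by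
  intro N
  induction N with
  | zero =>
    intro R hR
    refine ⟨0, Fin.elim0, Fin.elim0, fun i => i.elim0, fun i => i.elim0, ?_, ?_⟩
    · rintro ⟨i, _⟩; exact i.elim0
    · interval_cases h : R.card <;> simp
  | succ N ih =>
    intro R hR
    by_cases hpair : ∃ u ∈ R, ∃ v ∈ R, u ≠ v ∧ hammingDist u v ≤ 2 * d + 1
    · obtain ⟨u, hu, v, hv, huv, hd⟩ := hpair
      set R' := (R.erase u).erase v with hR'
      have hcard : R'.card = R.card - 2 := by
        rw [hR', Finset.card_erase_of_mem (Finset.mem_erase.mpr ⟨huv.symm, hv⟩),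
          Finset.card_erase_of_mem hu]
        omega
      have h2 : 2 ≤ R.card := by
        have := Finset.one_lt_card.mpr ⟨u, hu, v, hv, huv⟩
        omega
      obtain ⟨m, x, xt, hmem, hdist, hinj, hbound⟩ := ih R' (by omega)
      have hsub : R' ⊆ R := (Finset.erase_subset _ _).trans (Finset.erase_subset _ _)
      have hunotin : u ∉ R' := fun h => (Finset.mem_erase.mp (Finset.mem_of_mem_erase h)).1 rfl
      have hvnotin : v ∉ R' := fun h => (Finset.mem_erase.mp h).1 rfl
      refine ⟨m + 1, Fin.cons u x, Fin.cons v xt, ?_, ?_, ?_, ?_⟩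
      · intro i
        induction i using Fin.cases with
        | zero => exact ⟨hu, hv⟩
        | succ i => exact ⟨hsub (hmem i).1, hsub (hmem i).2⟩
      · intro i
        induction i using Fin.cases with
        | zero => simpa using hd
        | succ i => simpa using hdist i
      · exact extend_inj x xt u v hinj
          (fun i => ⟨fun h => hunotin (h ▸ (hmem i).1), fun h => hunotin (h ▸ (hmem i).2)⟩)
          (fun i => ⟨fun h => hvnotin (h ▸ (hmem i).1), fun h => hvnotin (h ▸ (hmem i).2)⟩)
          huv
      · have : R.card - 2 * (m + 1) = R'.card - 2 * m := by omega
        rw [this]; exact hbound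
    · push_neg at hpair
      refine ⟨0, Fin.elim0, Fin.elim0, fun i => i.elim0, fun i => i.elim0, ?_, ?_⟩
      · rintro ⟨i, _⟩; exact i.elim0
      · simpa using packing R (fun u hu v hv huv h => absurd h (not_le.mpr (hpair u hu v hv huv)))

/-- The graph on `R ⊆ {0,1}^n` joining points at Hamming distance at most `2d + 1`
contains a matching of size at least `(|R| - 2^n / ∑_{i ≤ d} C(n, i)) / 2`:
there are `m` pairs `(x^i, x̃^i)` of elements of `R`, all `2m` points pairwise distinct,
with `‖x^i - x̃^i‖₁ ≤ 2d + 1` for each `i`. -/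
theorem hypercube_matching {n d : ℕ} (R : Finset (Fin n → Bool)) :
    ∃ (m : ℕ) (x xt : Fin m → (Fin n → Bool)),
      ((R.card : ℝ) - 2 ^ n / ∑ i ∈ Finset.range (d + 1), (n.choose i : ℝ)) / 2 ≤ (m : ℝ) ∧
      (∀ i : Fin m, x i ∈ R ∧ xt i ∈ R) ∧
      (∀ i : Fin m, hammingDist (x i) (xt i) ≤ 2 * d + 1) ∧
      Function.Injective (fun p : Fin m × Bool => if p.2 then x p.1 else xt p.1) := by
  obtain ⟨m, x, xt, hmem, hdist, hinj, hbound⟩ := aux R.card R le_rfl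
  refine ⟨m, x, xt, ?_, hmem, hdist, hinj⟩
  set Sn := ∑ i ∈ Finset.range (d + 1), n.choose i with hSn
  have hSpos : 0 < Sn := by
    have : 1 ≤ Sn := by
      rw [hSn]
      calc 1 = n.choose 0 := (Nat.choose_zero_right n).symm
        _ ≤ _ := Finset.single_le_sum (f := fun i => n.choose i) (fun i _ => Nat.zero_le _)
            (Finset.mem_range.mpr (by omega))
    omega
  have hScast : (∑ i ∈ Finset.range (d + 1), (n.choose i : ℝ)) = (Sn : ℝ) := by
    rw [hSn]; push_cast; ring
  rw [hScast]
  have hSpos' : (0 : ℝ) < (Sn : ℝ) := by exact_mod_cast hSpos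
  rw [div_le_iff₀ (by norm_num : (0:ℝ) < 2), sub_le_iff_le_add]
  rcases le_or_gt R.card (2 * m) with h | h
  · have : (R.card : ℝ) ≤ (m : ℝ) * 2 := by exact_mod_cast (by omega : R.card ≤ m * 2)
    have hdiv : (0:ℝ) ≤ 2 ^ n / (Sn : ℝ) := by positivity
    linarith
  · have hkey : ((R.card - 2 * m : ℕ) : ℝ) ≤ 2 ^ n / (Sn : ℝ) := by
      rw [le_div_iff₀ hSpos']
      exact_mod_cast hbound
    have hc : ((R.card - 2 * m : ℕ) : ℝ) = (R.card : ℝ) - 2 * m := by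
      have : 2 * m ≤ R.card := by omega
      push_cast [this]; ring
    rw [hc] at hkey
    linarith
end

section
/- For every ε > 0 there exist a constant c > 0 and N ∈ ℕ such that for all n ≥ N and all x, Y ∈ {0,1}^n with ‖Y − x‖₁ ≥ 0.5·n^{0.9} − 1, we have Pr_{x̃ ~ RR_ε(x)}[‖Y − x̃‖₁ ≤ n/(1 + e^ε) + n^{0.6}] ≤ exp(−c·n^{0.8}). -/
open scoped ENNReal

/-- Product of independent `PMF`s on `Bool`, coordinate by coordinate. -/
noncomputable def piPMF : (n : ℕ) → (Fin n → PMF Bool) → PMF (Fin n → Bool)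
  | 0, _ => PMF.pure (fun i => Fin.elim0 i)
  | n + 1, f => (f 0).bind fun b => (piPMF n (fun i => f i.succ)).map (Fin.cons b)

/-- Randomized response: each coordinate of `x` is kept with probability
`e^ε / (1 + e^ε)` and flipped with probability `1 / (1 + e^ε)`, independently. -/
noncomputable def RR (ε : ℝ) {n : ℕ} (x : Fin n → Bool) : PMF (Fin n → Bool) :=
  piPMF n (fun i =>
    (PMF.bernoulli (Real.toNNReal (1 / (1 + Real.exp ε)))
      (by
        rw [Real.toNNReal_le_one, div_le_one (by positivity)]
        linarith [Real.exp_pos ε])).map (fun θ => xor θ (x i)))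

/-! The coordinates where `x̃` disagrees with `Y` are independent, the `i`-th with probability
`q = 1/(1+e^ε)` if `Yᵢ = xᵢ` and `1 - q` otherwise, so `‖Y - x̃‖₁` has mean `μ = nq + (1-2q)‖Y - x‖₁`.
As `‖Y - x‖₁ ≳ n^{0.9}/2`, the threshold `nq + n^{0.6}` lies `δ = (1-2q) n^{0.9}/4` below `μ` for
large `n`, and the exponential-moment (Chernoff) bound for the lower tail of a sum of `n`
independent indicators gives `exp(-δ²/(4n)) = exp(-(1-2q)² n^{0.8}/64)`. -/

open Filter Finset Real

lemma piPMF_apply : ∀ (n : ℕ) (f : Fin n → PMF Bool) (y : Fin n → Bool),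
    piPMF n f y = ∏ i, f i (y i)
  | 0, f, y => by simp [piPMF, PMF.pure_apply, funext_iff]
  | n + 1, f, y => by
    have hmap : ∀ b, (piPMF n (fun i => f i.succ)).map (Fin.cons b) y =
        if b = y 0 then ∏ i : Fin n, f i.succ (y i.succ) else 0 := by
      intro b
      rw [PMF.map_apply, tsum_eq_single (Fin.tail y)]
      · rw [← Fin.cons_self_tail y, Fin.cons_inj, piPMF_apply n]
        simp [eq_comm, Fin.tail]
      · intro z hz
        rw [← Fin.cons_self_tail y, Fin.cons_inj]
        simp [hz.symm]
    simp only [piPMF, PMF.bind_apply, hmap, mul_ite, mul_zero, tsum_ite_eq, Fin.prod_univ_succ]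

lemma sum_piPMF_mul_prod (n : ℕ) (f : Fin n → PMF Bool) (g : Fin n → Bool → ℝ) :
    ∑ y, (piPMF n f y).toReal * ∏ i, g i (y i) = ∏ i, ∑ b, (f i b).toReal * g i b := by
  simp only [piPMF_apply, ENNReal.toReal_prod, ← prod_mul_distrib, Fintype.prod_sum]

lemma PMF.toReal_add_toReal_not (p : PMF Bool) (b : Bool) :
    (p b).toReal + (p !b).toReal = 1 := by
  have h := p.tsum_coe
  rw [tsum_bool] at h
  rw [← ENNReal.toReal_add (p.apply_ne_top _) (p.apply_ne_top _)]
  cases b <;> simp [h, add_comm]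

lemma PMF.sum_toReal_mul_ite_eq (p : PMF Bool) (c : Bool) (e : ℝ) :
    ∑ b, (p b).toReal * (if c = b then 1 else e) = 1 - (1 - e) * (p !c).toReal := by
  have h := p.toReal_add_toReal_not c
  cases c <;>
    simp only [Fintype.sum_bool, Bool.not_false, Bool.not_true, Bool.false_eq_true,
      Bool.true_eq_false, ↓reduceIte, mul_one] at h ⊢ <;>
    linear_combination h

set_option linter.deprecated false in
lemma PMF.toReal_map_xor_bernoulli_apply (p : NNReal) (h : p ≤ 1) (b c : Bool) :
    ((PMF.bernoulli p h).map (xor · b) c).toReal = if c = b then 1 - (p : ℝ) else p := by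
  rw [PMF.map_apply, tsum_bool]
  cases b <;> cases c <;> simp [PMF.bernoulli_apply, h]

lemma pr_le_sum_mul {α : Type*} [Fintype α] (p : PMF α) (S : Set α) (g : α → ℝ)
    (hg₀ : ∀ a, 0 ≤ g a) (hg : ∀ a ∈ S, 1 ≤ g a) :
    pr p S ≤ ∑ a, (p a).toReal * g a := by
  rw [pr, p.toOuterMeasure_apply, tsum_fintype,
    ENNReal.toReal_sum fun a _ =>
    ne_top_of_le_ne_top (p.apply_ne_top a) (Set.indicator_le_self S p a)]
  refine sum_le_sum fun a _ => ?_
  by_cases ha : a ∈ S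
  · simpa [ha] using mul_le_mul_of_nonneg_left (hg a ha) ENNReal.toReal_nonneg
  · simpa [ha] using mul_nonneg ENNReal.toReal_nonneg (hg₀ a)

lemma hammingDist_eq_sum_ite {ι β : Type*} [Fintype ι] [DecidableEq β] (x y : ι → β) :
    (hammingDist x y : ℝ) = ∑ i, if x i = y i then 0 else 1 := by
  simp [hammingDist, card_filter]

lemma exp_mul_prod_ite_eq {ι β : Type*} [Fintype ι] [DecidableEq β] (Y y : ι → β) (t m : ℝ) :
    exp (t * m) * ∏ i, (if Y i = y i then 1 else exp (-t)) =
      exp (t * (m - hammingDist Y y)) := by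
  rw [prod_ite, prod_const_one, one_mul, prod_const, ← exp_nat_mul, ← exp_add]
  simp only [mul_neg, hammingDist, ne_eq, exp_eq_exp]
  ring

theorem pr_piPMF_hammingDist_le (n : ℕ) (f : Fin n → PMF Bool) (Y : Fin n → Bool) {t : ℝ}
    (ht : 0 ≤ t) (m : ℝ) :
    pr (piPMF n f) {y | (hammingDist Y y : ℝ) ≤ m} ≤
      exp (t * m - (1 - exp (-t)) * ∑ i, (f i !Y i).toReal) := by
  set g : Fin n → Bool → ℝ := fun i b => if Y i = b then 1 else exp (-t)
  calc pr (piPMF n f) {y | (hammingDist Y y : ℝ) ≤ m}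
      ≤ ∑ y, (piPMF n f y).toReal * (exp (t * m) * ∏ i, g i (y i)) := by
        refine pr_le_sum_mul _ _ _ (fun y => by positivity) fun y hy => ?_
        rw [exp_mul_prod_ite_eq]
        exact one_le_exp (mul_nonneg ht (sub_nonneg.mpr hy))
    _ = exp (t * m) * ∏ i, ∑ b, (f i b).toReal * g i b := by
        rw [← sum_piPMF_mul_prod, mul_sum]
        exact sum_congr rfl fun y _ => mul_left_comm _ _ _
    _ ≤ exp (t * m) * ∏ i, exp (-((1 - exp (-t)) * (f i !Y i).toReal)) := by
        gcongr with i
        rw [PMF.sum_toReal_mul_ite_eq]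
        linarith [add_one_le_exp (-((1 - exp (-t)) * (f i !Y i).toReal))]
    _ = exp (t * m - (1 - exp (-t)) * ∑ i, (f i !Y i).toReal) := by
        rw [← exp_sum, ← exp_add, sum_neg_distrib, mul_sum, ← sub_eq_add_neg]

theorem pr_piPMF_hammingDist_le_of_le_sub (n : ℕ) (f : Fin n → PMF Bool) (Y : Fin n → Bool)
    {m δ : ℝ} (hδ₀ : 0 ≤ δ) (hδ : δ ≤ 2 * n) (hm : m ≤ ∑ i, (f i !Y i).toReal - δ) :
    pr (piPMF n f) {y | (hammingDist Y y : ℝ) ≤ m} ≤ exp (-(δ ^ 2 / (4 * n))) := by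
  set μ := ∑ i, (f i !Y i).toReal
  have hμ₀ : 0 ≤ μ := sum_nonneg fun i _ => ENNReal.toReal_nonneg
  have hμn : μ ≤ n := by
    simpa using sum_le_card_nsmul univ (fun i => (f i !Y i).toReal) 1 fun i _ =>
      ENNReal.toReal_le_of_le_ofReal zero_le_one (by simpa using (f i).coe_le_one _)
  -- `t = δ / (2n)` minimises `-tδ + t²n`, the bound obtained from `e^{-t} - 1 + t ≤ t²`
  set t := δ / (2 * n)
  have ht₀ : 0 ≤ t := by positivity
  have ht₁ : t ≤ 1 := div_le_one_of_le₀ hδ (by positivity)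
  have htaylor : exp (-t) - 1 + t ≤ t ^ 2 := by
    have := (abs_le.mp (abs_exp_sub_one_sub_id_le (x := -t) (by simpa [abs_of_nonneg ht₀]))).2
    linarith [neg_sq t]
  have htaylor₀ : 0 ≤ exp (-t) - 1 + t := by linarith [add_one_le_exp (-t)]
  refine (pr_piPMF_hammingDist_le n f Y ht₀ m).trans (exp_le_exp.mpr ?_)
  calc t * m - (1 - exp (-t)) * μ
      ≤ t * (μ - δ) - (1 - exp (-t)) * μ := by gcongr
    _ = -(t * δ) + (exp (-t) - 1 + t) * μ := by ring
    _ ≤ -(t * δ) + t ^ 2 * n := by gcongr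
    _ = -(δ ^ 2 / (4 * n)) := by
        rcases eq_or_ne (n : ℝ) 0 with hn | hn
        · simp [t, hn]
        · simp only [t]; field_simp; ring

theorem pr_RR_hammingDist_le (ε : ℝ) {n : ℕ} (x Y : Fin n → Bool) {m δ : ℝ} (hδ₀ : 0 ≤ δ)
    (hδ : δ ≤ 2 * n)
    (hm : m ≤ n * (1 / (1 + exp ε)) + (1 - 2 * (1 / (1 + exp ε))) * hammingDist Y x - δ) :
    pr (RR ε x) {y | (hammingDist Y y : ℝ) ≤ m} ≤ exp (-(δ ^ 2 / (4 * n))) := by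
  refine pr_piPMF_hammingDist_le_of_le_sub n _ Y hδ₀ hδ (hm.trans_eq ?_)
  have hq : 0 ≤ (1 + exp ε)⁻¹ := by positivity
  have hnq : n * (1 / (1 + exp ε)) = ∑ _i : Fin n, 1 / (1 + exp ε) := by simp
  rw [hnq, hammingDist_eq_sum_ite, mul_sum, ← sum_add_distrib]
  congr 1
  refine sum_congr rfl fun i _ => ?_
  rw [PMF.toReal_map_xor_bernoulli_apply, Real.coe_toNNReal']
  cases Y i <;> cases x i <;> simp [max_eq_left hq] <;> ring

lemma eventually_add_rpow_le_mul_rpow {γ : ℝ} (hγ : 0 < γ) :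
    ∀ᶠ n : ℝ in atTop, γ + n ^ (0.6 : ℝ) ≤ γ / 4 * n ^ (0.9 : ℝ) := by
  filter_upwards [(tendsto_rpow_atTop (by norm_num : (0 : ℝ) < 0.3)).eventually_ge_atTop
    (max 8 (8 / γ)), eventually_ge_atTop 1] with n h3 hn
  have h6 : 1 ≤ n ^ (0.6 : ℝ) := one_le_rpow hn (by norm_num)
  have h9 : n ^ (0.9 : ℝ) = n ^ (0.3 : ℝ) * n ^ (0.6 : ℝ) := by
    rw [← rpow_add (by linarith)]; norm_num
  have h8 : 8 ≤ n ^ (0.3 : ℝ) := le_of_max_le_left h3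
  have h8γ : 8 ≤ γ * n ^ (0.3 : ℝ) := (div_le_iff₀' hγ).mp (le_of_max_le_right h3)
  rw [h9]
  nlinarith

lemma sq_rpow_nine_tenths (x : ℝ) (hx : 0 ≤ x) : (x ^ (0.9 : ℝ)) ^ 2 = x ^ (0.8 : ℝ) * x := by
  rw [← rpow_natCast, ← rpow_mul hx, ← rpow_add_one' hx (by norm_num)]
  norm_num

/-- If `‖Y - x‖₁ ≥ 0.5 n^{0.9} - 1`, then a randomized response `x̃ ~ RR_ε(x)` lands
within distance `n/(1 + e^ε) + n^{0.6}` of `Y` with probability at most `exp(-c n^{0.8})`. -/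
theorem rr_far_point (ε : ℝ) (hε : 0 < ε) :
    ∃ c > (0 : ℝ), ∃ N : ℕ, ∀ n ≥ N, ∀ x Y : Fin n → Bool,
      0.5 * (n : ℝ) ^ (0.9 : ℝ) - 1 ≤ (hammingDist Y x : ℝ) →
      pr (RR ε x)
          {xt | (hammingDist Y xt : ℝ) ≤ (n : ℝ) / (1 + Real.exp ε) + (n : ℝ) ^ (0.6 : ℝ)} ≤
        Real.exp (-c * (n : ℝ) ^ (0.8 : ℝ)) := by
  have hq₀ : 0 ≤ 1 / (1 + exp ε) := by positivity
  have hq₁ : 1 / (1 + exp ε) < 1 / 2 :=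
    one_div_lt_one_div_of_lt two_pos (by linarith [one_lt_exp_iff.mpr hε])
  set γ := 1 - 2 * (1 / (1 + exp ε))
  have hγ : 0 < γ := by linarith
  have hγ₁ : γ ≤ 1 := by linarith
  obtain ⟨N, hN⟩ := eventually_atTop.mp
    ((tendsto_natCast_atTop_atTop.eventually (eventually_add_rpow_le_mul_rpow hγ)).and
      (eventually_ge_atTop 1))
  refine ⟨γ ^ 2 / 64, by positivity, N, fun n hn x Y hd => ?_⟩
  obtain ⟨hgap, hn₁⟩ := hN n hn
  have hn₁ : (1 : ℝ) ≤ n := by exact_mod_cast hn₁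
  have hδ : γ / 4 * (n : ℝ) ^ (0.9 : ℝ) ≤ 2 * n := by
    nlinarith [rpow_le_self_of_one_le hn₁ (by norm_num : (0.9 : ℝ) ≤ 1),
      rpow_nonneg (by positivity : (0 : ℝ) ≤ n) 0.9]
  refine (pr_RR_hammingDist_le ε x Y (by positivity) hδ ?_).trans_eq ?_
  · have hfar := mul_le_mul_of_nonneg_left hd hγ.le
    simp only [γ] at hfar hgap ⊢
    rw [mul_one_div]
    linarith
  · rw [mul_pow, sq_rpow_nine_tenths _ (by positivity)]
    congr 1
    field_simp
    ring
end

section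
/- Let M_base : {0,1}^n → PMF(Y × ℝ) be a mechanism, let s ∈ ℝ be a threshold, T ∈ ℕ a number of steps, and γ ∈ (0,1] a stopping probability. Define the tuning mechanism M_tuning : {0,1}^n → PMF(Y ⊕ {⊥}) on input D as follows: for j = 1, …, T, sample (y, q) ← M_base(D); if q ≤ s, output y and halt; otherwise, with probability γ output ⊥ and halt; if no output has been produced after T iterations, output ⊥. If M_base is (ε, δ)-SDP and T ≥ 2/γ, then M_tuning is (2ε + 1, 10·e^{2ε}·δ/γ)-SDP. -/
open scoped ENNReal

/-- The hyperparameter-tuning loop: for up to `T` rounds, sample `(y, q)` from `Mb`;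
if `q ≤ s`, output `some y` and halt; otherwise with probability `γ` output `none`
(i.e. `⊥`) and halt; output `none` if no output was produced after `T` rounds. -/
noncomputable def tuningAux {Y : Type*} (Mb : PMF (Y × ℝ)) (s : ℝ)
    (γ : ℝ≥0∞) (hγ : γ ≤ 1) : ℕ → PMF (Option Y)
  | 0 => PMF.pure none
  | T + 1 => Mb.bind fun yq =>
      if yq.2 ≤ s then PMF.pure (some yq.1)
      else (PMF.bernoulli γ.toNNReal
        (by exact_mod_cast ENNReal.coe_toNNReal_le_self.trans hγ)).bind fun halt =>
        if halt then PMF.pure none else tuningAux Mb s γ hγ T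

/-!
Let `w = rejectProb` be the probability that a base round is rejected (`q > s`),
`f = haltRate = 1 - (1 - γ) w` the probability that a round halts, and `c = roundProb` the
probability that it halts with an output in `S`.
The output law obeys `P (T + 1) = c + (1 - f) P T` with `P 0 = [⊥ ∈ S]`, so
`(1 - (1 - f)^T) c / f ≤ P T ≤ c / f + [⊥ ∈ S] (1 - f)^T`, and `(1 - f)^T ≤ exp (-2 f / γ)` because
`T ≥ 2 / γ`. Privacy of the base mechanism makes `c` and `f`, hence `c / f`, `e^{2ε}`-close
up to `O(δ / γ)` (when `δ ≤ γ / 10`; otherwise the additive term exceeds `1`). The lower bound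
costs the factor `1 - e^{-2}`, and the mass `(1 - f)^T` sent to `⊥` by the timeout is charged to
the `⊥`-term `γ w' / f'` of the neighbouring dataset: it is at most `γ w` when `w ≤ 1/2`, and at
most `e^{-1} γ / (2 f)` when `w ≥ 1/2`, in which case `w' ≥ 2 / (5 e^ε)`.
-/

open Real MeasureTheory

section Probability

variable {α β : Type*}

lemma PMF.toOuterMeasure_apply_le_one (p : PMF α) (S : Set α) : p.toOuterMeasure S ≤ 1 :=
  (measure_mono (Set.subset_univ S)).trans_eq
    ((p.toOuterMeasure_apply_eq_one_iff _).2 (Set.subset_univ _))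

lemma PMF.toOuterMeasure_apply_ne_top (p : PMF α) (S : Set α) : p.toOuterMeasure S ≠ ⊤ :=
  ne_top_of_le_ne_top ENNReal.one_ne_top (p.toOuterMeasure_apply_le_one S)

lemma pr_nonneg (p : PMF α) (S : Set α) : 0 ≤ pr p S := ENNReal.toReal_nonneg

lemma pr_le_one (p : PMF α) (S : Set α) : pr p S ≤ 1 :=
  ENNReal.toReal_le_of_le_ofReal zero_le_one
    (by simpa using p.toOuterMeasure_apply_le_one S)

lemma pr_compl (p : PMF α) (S : Set α) : pr p Sᶜ = 1 - pr p S := by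
  let _ : MeasurableSpace α := ⊤
  have h (A : Set α) : pr p A = p.toMeasure.real A := by
    rw [measureReal_def,
      p.toMeasure_apply_eq_toOuterMeasure_apply MeasurableSpace.measurableSet_top]
    rfl
  rw [h, h, probReal_compl_eq_one_sub MeasurableSpace.measurableSet_top]

lemma pr_le_mul_add_of_one_le {p p' : PMF α} {a d : ℝ} (ha : 0 ≤ a) (hd : 1 ≤ d) (S : Set α) :
    pr p S ≤ a * pr p' S + d := by
  nlinarith [pr_le_one p S, pr_nonneg p' S]

lemma pr_bind_ite_pure (p : PMF α) (P : α → Prop) [DecidablePred P] (g : α → β) (q : PMF β)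
    (S : Set β) :
    pr (p.bind fun a => if P a then PMF.pure (g a) else q) S =
      pr p {a | P a ∧ g a ∈ S} + pr p {a | ¬ P a} * pr q S := by
  have h : (p.bind fun a => if P a then PMF.pure (g a) else q).toOuterMeasure S =
      p.toOuterMeasure {a | P a ∧ g a ∈ S} + p.toOuterMeasure {a | ¬ P a} * q.toOuterMeasure S := by
    rw [PMF.toOuterMeasure_bind_apply, PMF.toOuterMeasure_apply, PMF.toOuterMeasure_apply,
      ← ENNReal.tsum_mul_right, ← ENNReal.tsum_add]
    refine tsum_congr fun a => ?_
    by_cases ha : P a <;> by_cases hg : g a ∈ S <;>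
      simp [ha, hg, PMF.toOuterMeasure_pure_apply]
  rw [pr, h, ENNReal.toReal_add (PMF.toOuterMeasure_apply_ne_top _ _) (ENNReal.mul_ne_top
    (PMF.toOuterMeasure_apply_ne_top _ _) (PMF.toOuterMeasure_apply_ne_top _ _)), ENNReal.toReal_mul]
  rfl

lemma pr_bernoulli_bind (r : NNReal) (hr : r ≤ 1) (g : Bool → PMF β) (S : Set β) :
    pr ((PMF.bernoulli r hr).bind g) S = r * pr (g true) S + (1 - r) * pr (g false) S := by
  have h : ((PMF.bernoulli r hr).bind g).toOuterMeasure S =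
      r * (g true).toOuterMeasure S + (1 - r) * (g false).toOuterMeasure S := by
    rw [PMF.toOuterMeasure_bind_apply, tsum_bool, add_comm]
    simp [PMF.bernoulli_apply]
  have hr' : (r : ℝ≥0∞) ≤ 1 := by exact_mod_cast hr
  rw [pr, h, ENNReal.toReal_add
    (ENNReal.mul_ne_top ENNReal.coe_ne_top (PMF.toOuterMeasure_apply_ne_top _ _))
    (ENNReal.mul_ne_top (by simp) (PMF.toOuterMeasure_apply_ne_top _ _)),
    ENNReal.toReal_mul, ENNReal.toReal_mul, ENNReal.toReal_sub_of_le hr' ENNReal.one_ne_top]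
  rfl

end Probability

lemma mul_one_sub_eq_of_succ_eq {P : ℕ → ℝ} {c r : ℝ} (h : ∀ n, P (n + 1) = c + r * P n)
    (n : ℕ) : P n * (1 - r) = c * (1 - r ^ n) + r ^ n * (1 - r) * P 0 := by
  induction n with
  | zero => ring
  | succ n ih => rw [h, pow_succ]; linear_combination r * ih

lemma pow_le_exp_neg_mul_one_sub {r : ℝ} (hr : 0 ≤ r) (n : ℕ) : r ^ n ≤ exp (-(n * (1 - r))) :=
  calc r ^ n ≤ exp (-(1 - r)) ^ n :=
        pow_le_pow_left₀ hr (by linarith [add_one_le_exp (-(1 - r))]) n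
    _ = exp (-(n * (1 - r))) := by rw [← exp_nat_mul, mul_neg]

section PowBounds

variable {γ : ℝ} (hγ0 : 0 < γ) (hγ1 : γ ≤ 1) {T : ℕ} (hT : 2 / γ ≤ T)
include hγ0 hγ1 hT

lemma one_sub_mul_pow_le_exp {w : ℝ} (hw0 : 0 ≤ w) (hw1 : w ≤ 1) :
    ((1 - γ) * w) ^ T ≤ exp (-(2 / γ * (1 - (1 - γ) * w))) := by
  have hr0 : 0 ≤ (1 - γ) * w := mul_nonneg (by linarith) hw0
  have hf : 0 ≤ 1 - (1 - γ) * w := by nlinarith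
  exact (pow_le_exp_neg_mul_one_sub hr0 T).trans
    (exp_le_exp.2 (neg_le_neg (mul_le_mul_of_nonneg_right hT hf)))

lemma one_sub_mul_pow_le_mul_of_le_half {w : ℝ} (hw0 : 0 ≤ w) (hw : w ≤ 1 / 2) :
    ((1 - γ) * w) ^ T ≤ γ * w := by
  have hr0 : 0 ≤ (1 - γ) * w := mul_nonneg (by linarith) hw0
  obtain ⟨k, rfl⟩ : ∃ k, T = k + 1 :=
    Nat.exists_eq_add_one.2 (by exact_mod_cast (div_pos two_pos hγ0).trans_le hT)
  have hk : (1 / 2) ^ k ≤ γ := by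
    have h1 : 1 ≤ 1 / γ := by rw [le_div_iff₀ hγ0]; linarith
    have h2 : (k : ℝ) ≤ 2 ^ k := by exact_mod_cast Nat.lt_two_pow_self.le
    have h3 : 1 / γ ≤ 2 ^ k := by push_cast at hT; rw [div_eq_mul_one_div 2] at hT; linarith
    rw [div_le_iff₀ hγ0] at h3
    rw [one_div_pow, div_le_iff₀ (by positivity)]; linarith
  calc ((1 - γ) * w) ^ (k + 1) = ((1 - γ) * w) ^ k * ((1 - γ) * w) := pow_succ _ _
    _ ≤ (1 / 2) ^ k * w :=
        mul_le_mul (pow_le_pow_left₀ hr0 (by nlinarith) k) (by nlinarith) hr0 (by positivity)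
    _ ≤ γ * w := mul_le_mul_of_nonneg_right hk hw0

lemma one_sub_mul_pow_le {δ E w w' : ℝ} (hδ : 0 ≤ δ) (hδγ : 10 * δ ≤ γ) (hE : 1 ≤ E)
    (hw0 : 0 ≤ w) (hw1 : w ≤ 1) (hw'0 : 0 ≤ w') (hw'1 : w' ≤ 1) (hww' : w ≤ E * w' + δ)
    (hf : 1 - (1 - γ) * w' ≤ 6 / 5 * E * (1 - (1 - γ) * w)) :
    ((1 - γ) * w) ^ T ≤ E ^ 2 * (γ * w' / (1 - (1 - γ) * w')) + δ / γ := by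
  set f := 1 - (1 - γ) * w
  set f' := 1 - (1 - γ) * w'
  have hγf : γ ≤ f := by nlinarith
  have hf'0 : 0 < f' := by nlinarith
  have hf'1 : f' ≤ 1 := by nlinarith
  have hγw' : γ * w' ≤ γ * w' / f' := le_div_self (by positivity) hf'0 hf'1
  rcases le_total w (1 / 2) with hw | hw
  · calc ((1 - γ) * w) ^ T ≤ γ * w := one_sub_mul_pow_le_mul_of_le_half hγ0 hγ1 hT hw0 hw
      _ ≤ E * (γ * w') + γ * δ := by nlinarith
      _ ≤ E ^ 2 * (γ * w' / f') + δ / γ := by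
          gcongr
          · exact le_self_pow₀ hE two_ne_zero
          · rw [le_div_iff₀ hγ0]
            nlinarith [mul_le_mul_of_nonneg_right (mul_le_one₀ hγ1 hγ0.le hγ1) hδ]
  · have hEw' : 2 / 5 ≤ E * w' := by linarith
    have hf0 : 0 < f := hγ0.trans_le hγf
    calc ((1 - γ) * w) ^ T ≤ exp (-(2 / γ * f)) := one_sub_mul_pow_le_exp hγ0 hγ1 hT hw0 hw1
      _ ≤ exp (-1) / (2 / γ * f) := by
          rw [le_div_iff₀ (by positivity), mul_comm]; exact mul_exp_neg_le_exp_neg_one _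
      _ ≤ γ / (3 * f) := by
          rw [div_le_div_iff₀ (by positivity) (by positivity)]
          have : 2 / γ * f * γ = 2 * f := by field_simp
          nlinarith [exp_neg_one_lt_half]
      _ ≤ E ^ 2 * (γ * w' / f') := by
          rw [mul_div_assoc', div_le_div_iff₀ (by positivity) hf'0]
          nlinarith [mul_le_mul_of_nonneg_left hf hγ0.le,
            mul_le_mul_of_nonneg_left hEw' (by positivity : 0 ≤ 3 * f * E * γ)]
      _ ≤ _ := le_add_of_nonneg_right (by positivity)

end PowBounds

section Tuning

variable {Y : Type*} (Mb : PMF (Y × ℝ)) (s : ℝ)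

noncomputable def rejectProb : ℝ := pr Mb {yq | ¬ yq.2 ≤ s}

noncomputable def haltRate (γ : ℝ) : ℝ := 1 - (1 - γ) * rejectProb Mb s

noncomputable def roundProb (γ : ℝ) (S : Set (Option Y)) : ℝ :=
  pr Mb {yq | yq.2 ≤ s ∧ some yq.1 ∈ S} + γ * rejectProb Mb s * pr (PMF.pure none) S

lemma le_haltRate {γ : ℝ} (hγ : γ ≤ 1) : γ ≤ haltRate Mb s γ := by
  have := pr_le_one Mb {yq | ¬ yq.2 ≤ s}
  unfold haltRate rejectProb; nlinarith

lemma haltRate_le_one {γ : ℝ} (hγ : γ ≤ 1) : haltRate Mb s γ ≤ 1 := by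
  have := pr_nonneg Mb {yq | ¬ yq.2 ≤ s}
  unfold haltRate rejectProb; nlinarith

lemma pr_tuningAux_succ (γ : ℝ≥0∞) (hγ : γ ≤ 1) (S : Set (Option Y)) (T : ℕ) :
    pr (tuningAux Mb s γ hγ (T + 1)) S =
      roundProb Mb s γ.toReal S + (1 - haltRate Mb s γ.toReal) * pr (tuningAux Mb s γ hγ T) S := by
  rw [tuningAux, pr_bind_ite_pure, pr_bernoulli_bind]
  simp only [if_true, Bool.false_eq_true, if_false, ENNReal.coe_toNNReal_eq_toReal, roundProb,
    haltRate, rejectProb]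
  ring

lemma pr_tuningAux_mul_haltRate (γ : ℝ≥0∞) (hγ : γ ≤ 1) (S : Set (Option Y)) (T : ℕ) :
    pr (tuningAux Mb s γ hγ T) S * haltRate Mb s γ.toReal =
      roundProb Mb s γ.toReal S * (1 - (1 - haltRate Mb s γ.toReal) ^ T) +
        (1 - haltRate Mb s γ.toReal) ^ T * haltRate Mb s γ.toReal * pr (PMF.pure none) S := by
  have h := mul_one_sub_eq_of_succ_eq (P := fun T => pr (tuningAux Mb s γ hγ T) S)
    (pr_tuningAux_succ Mb s γ hγ S) T
  rwa [sub_sub_cancel] at h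

lemma roundProb_nonneg {γ : ℝ} (hγ : 0 ≤ γ) (S : Set (Option Y)) : 0 ≤ roundProb Mb s γ S := by
  unfold roundProb rejectProb
  have := pr_nonneg Mb {yq | yq.2 ≤ s ∧ some yq.1 ∈ S}
  have := pr_nonneg Mb {yq | ¬ yq.2 ≤ s}
  have := pr_nonneg (PMF.pure (none : Option Y)) S
  positivity

lemma pr_tuningAux_le {γ : ℝ} (hγ0 : 0 < γ) (hγ : ENNReal.ofReal γ ≤ 1) (S : Set (Option Y))
    (T : ℕ) :
    pr (tuningAux Mb s (ENNReal.ofReal γ) hγ T) S ≤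
      roundProb Mb s γ S / haltRate Mb s γ + pr (PMF.pure none) S * (1 - haltRate Mb s γ) ^ T := by
  have h := pr_tuningAux_mul_haltRate Mb s _ hγ S T
  rw [ENNReal.toReal_ofReal hγ0.le] at h
  have hγ1 := ENNReal.ofReal_le_one.mp hγ
  have hf := hγ0.trans_le (le_haltRate Mb s hγ1)
  have ht := pow_nonneg (sub_nonneg.2 (haltRate_le_one Mb s hγ1)) T
  have hc := roundProb_nonneg Mb s hγ0.le S
  rw [div_add' _ _ _ hf.ne', le_div_iff₀ hf]
  nlinarith

lemma pr_tuningAux_ge {γ : ℝ} (hγ0 : 0 < γ) (hγ : ENNReal.ofReal γ ≤ 1) (S : Set (Option Y))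
    (T : ℕ) :
    (1 - (1 - haltRate Mb s γ) ^ T) * (roundProb Mb s γ S / haltRate Mb s γ) ≤
      pr (tuningAux Mb s (ENNReal.ofReal γ) hγ T) S := by
  have h := pr_tuningAux_mul_haltRate Mb s _ hγ S T
  rw [ENNReal.toReal_ofReal hγ0.le] at h
  have hγ1 := ENNReal.ofReal_le_one.mp hγ
  have hf := hγ0.trans_le (le_haltRate Mb s hγ1)
  have ht := pow_nonneg (sub_nonneg.2 (haltRate_le_one Mb s hγ1)) T
  have hχ := pr_nonneg (PMF.pure (none : Option Y)) S
  rw [mul_div_assoc', div_le_iff₀ hf]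
  nlinarith [mul_nonneg (mul_nonneg ht hf.le) hχ]

lemma pow_one_sub_haltRate_le {γ : ℝ} (hγ0 : 0 < γ)
    (hγ1 : γ ≤ 1) {T : ℕ} (hT : 2 / γ ≤ T) : (1 - haltRate Mb s γ) ^ T ≤ exp (-2) := by
  have hγf := le_haltRate Mb s hγ1
  rw [haltRate, sub_sub_cancel]
  refine (one_sub_mul_pow_le_exp hγ0 hγ1 hT (pr_nonneg _ _) (pr_le_one _ _)).trans
    (exp_le_exp.2 (neg_le_neg ?_))
  calc (2 : ℝ) = 2 / γ * γ := by field_simp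
    _ ≤ 2 / γ * haltRate Mb s γ := by gcongr

variable {Mb} {Mb' : PMF (Y × ℝ)} {E δ γ : ℝ}

lemma roundProb_le_of_pr_le (h : ∀ S, pr Mb S ≤ E * pr Mb' S + δ) (hγ0 : 0 ≤ γ) (hγ1 : γ ≤ 1)
    (hδ : 0 ≤ δ) (S : Set (Option Y)) :
    roundProb Mb s γ S ≤ E * roundProb Mb' s γ S + 2 * δ := by
  have hα := h {yq | yq.2 ≤ s ∧ some yq.1 ∈ S}
  have hw := h {yq | ¬ yq.2 ≤ s}
  have hχ0 := pr_nonneg (PMF.pure (none : Option Y)) S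
  have hχ1 := pr_le_one (PMF.pure (none : Option Y)) S
  have hγχ : γ * pr (PMF.pure none) S ≤ 1 := mul_le_one₀ hγ1 hχ0 hχ1
  unfold roundProb rejectProb
  nlinarith [mul_le_mul_of_nonneg_left hw (mul_nonneg hγ0 hχ0)]

lemma haltRate_le_of_pr_le (h : ∀ S, pr Mb' S ≤ E * pr Mb S + δ) (hE : 1 ≤ E) (hγ1 : γ ≤ 1)
    (hδ : 0 ≤ δ) (hδγ : 10 * δ ≤ γ) :
    haltRate Mb' s γ ≤ 6 / 5 * E * haltRate Mb s γ := by
  have hf := le_haltRate Mb s hγ1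
  have hw := h {yq | ¬ yq.2 ≤ s}
  have hw' := h {yq | ¬ yq.2 ≤ s}ᶜ
  rw [pr_compl, pr_compl] at hw'
  unfold haltRate rejectProb at *
  nlinarith [mul_le_mul_of_nonneg_left hw (by linarith : 0 ≤ γ)]

end Tuning

section Adjacent

variable {Y : Type*} {Mb Mb' : PMF (Y × ℝ)} (s : ℝ) {E δ γ : ℝ}
  (h : ∀ S, pr Mb S ≤ E * pr Mb' S + δ) (h' : ∀ S, pr Mb' S ≤ E * pr Mb S + δ)
  (hE : 1 ≤ E) (hγ0 : 0 < γ) (hγ1 : γ ≤ 1) (hδ : 0 ≤ δ) (hδγ : 10 * δ ≤ γ)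
include h h' hE hγ0 hγ1 hδ hδγ

lemma roundProb_div_haltRate_le (S : Set (Option Y)) :
    roundProb Mb s γ S / haltRate Mb s γ ≤
      6 / 5 * E ^ 2 * (roundProb Mb' s γ S / haltRate Mb' s γ) + 2 * (δ / γ) := by
  have hc := roundProb_le_of_pr_le s h hγ0.le hγ1 hδ S
  have hf := haltRate_le_of_pr_le s h' hE hγ1 hδ hδγ
  set c := roundProb Mb s γ S
  set c' := roundProb Mb' s γ S
  set f := haltRate Mb s γ
  set f' := haltRate Mb' s γ
  have hγf : γ ≤ f := le_haltRate Mb s hγ1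
  have hf0 : 0 < f := hγ0.trans_le hγf
  have hf'0 : 0 < f' := hγ0.trans_le (le_haltRate Mb' s hγ1)
  have hc'0 : 0 ≤ c' := roundProb_nonneg Mb' s hγ0.le S
  have hEc' : E * c' / f ≤ 6 / 5 * E ^ 2 * c' / f' := by
    rw [div_le_div_iff₀ hf0 hf'0]
    nlinarith [mul_le_mul_of_nonneg_left hf (by positivity : 0 ≤ E * c')]
  calc c / f ≤ E * c' / f + 2 * δ / f := by rw [← add_div]; gcongr
    _ ≤ 6 / 5 * E ^ 2 * c' / f' + 2 * δ / γ := by gcongr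
    _ = 6 / 5 * E ^ 2 * (c' / f') + 2 * (δ / γ) := by ring

lemma pr_pure_none_mul_pow_le {T : ℕ} (hT : 2 / γ ≤ T) (S : Set (Option Y)) :
    pr (PMF.pure none) S * (1 - haltRate Mb s γ) ^ T ≤
      E ^ 2 * (roundProb Mb' s γ S / haltRate Mb' s γ) + δ / γ := by
  have hf := haltRate_le_of_pr_le s h' hE hγ1 hδ hδγ
  have ht : (1 - haltRate Mb s γ) ^ T ≤
      E ^ 2 * (γ * rejectProb Mb' s / haltRate Mb' s γ) + δ / γ := by
    rw [haltRate, sub_sub_cancel]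
    exact one_sub_mul_pow_le hγ0 hγ1 hT hδ hδγ hE (pr_nonneg _ _) (pr_le_one _ _) (pr_nonneg _ _)
        (pr_le_one _ _) (h _) hf
  have hχ0 := pr_nonneg (PMF.pure (none : Option Y)) S
  have hχ1 := pr_le_one (PMF.pure (none : Option Y)) S
  have hf'0 := hγ0.trans_le (le_haltRate Mb' s hγ1)
  have hround : pr (PMF.pure none) S * (γ * rejectProb Mb' s) ≤ roundProb Mb' s γ S := by
    unfold roundProb; nlinarith [pr_nonneg Mb' {yq | yq.2 ≤ s ∧ some yq.1 ∈ S}]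
  calc pr (PMF.pure none) S * (1 - haltRate Mb s γ) ^ T
      ≤ pr (PMF.pure none) S * (E ^ 2 * (γ * rejectProb Mb' s / haltRate Mb' s γ) + δ / γ) := by
        gcongr
    _ = E ^ 2 * (pr (PMF.pure none) S * (γ * rejectProb Mb' s) / haltRate Mb' s γ) +
          pr (PMF.pure none) S * (δ / γ) := by ring
    _ ≤ E ^ 2 * (roundProb Mb' s γ S / haltRate Mb' s γ) + δ / γ := by
        gcongr
        · exact mul_le_of_le_one_left (by positivity) hχ1

end Adjacent

/-- DP hyperparameter tuning (Liu–Talwar): if `M_base` is `(ε, δ)`-SDP and `T ≥ 2/γ`,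
then the tuning mechanism is `(2ε + 1, 10 e^{2ε} δ / γ)`-SDP. -/
theorem dp_hyperparameter_tuning {n : ℕ} {Y : Type*}
    (Mbase : (Fin n → Bool) → PMF (Y × ℝ)) (s : ℝ) (T : ℕ)
    (γ : ℝ) (hγ0 : 0 < γ) (hγ1 : γ ≤ 1)
    (ε δ : ℝ) (hε : 0 < ε) (hδ : 0 ≤ δ)
    (hT : 2 / γ ≤ (T : ℝ))
    (hbase : IsSDP Mbase ε δ) :
    IsSDP (fun D => tuningAux (Mbase D) s (ENNReal.ofReal γ)
        (ENNReal.ofReal_le_one.mpr hγ1) T)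
      (2 * ε + 1) (10 * Real.exp (2 * ε) * δ / γ) := by
  intro x x' hadj S
  have hγ := ENNReal.ofReal_le_one.mpr hγ1
  rcases lt_or_ge γ (10 * δ) with hδγ | hδγ
  · refine pr_le_mul_add_of_one_le (exp_pos _).le ?_ S
    rw [le_div_iff₀ hγ0]; nlinarith [one_le_exp (by linarith : 0 ≤ 2 * ε)]
  have hE : 1 ≤ exp ε := one_le_exp hε.le
  have hxx' := hbase x x' hadj
  have hx'x := hbase x' x (by rwa [hammingDist_comm])
  set Q := roundProb (Mbase x') s γ S / haltRate (Mbase x') s γ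
  have hQ : 0 ≤ Q := div_nonneg (roundProb_nonneg _ s hγ0.le S)
    (hγ0.le.trans (le_haltRate _ s hγ1))
  have hlower : (1 - exp (-2)) * Q ≤ pr (tuningAux (Mbase x') s (ENNReal.ofReal γ) hγ T) S := by
    refine le_trans (mul_le_mul_of_nonneg_right ?_ hQ) (pr_tuningAux_ge _ s hγ0 hγ S T)
    linarith [pow_one_sub_haltRate_le (Mbase x') s hγ0 hγ1 hT]
  calc pr (tuningAux (Mbase x) s (ENNReal.ofReal γ) hγ T) S
      ≤ roundProb (Mbase x) s γ S / haltRate (Mbase x) s γ +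
          pr (PMF.pure none) S * (1 - haltRate (Mbase x) s γ) ^ T := pr_tuningAux_le _ s hγ0 hγ S T
    _ ≤ (6 / 5 * exp ε ^ 2 * Q + 2 * (δ / γ)) + (exp ε ^ 2 * Q + δ / γ) := add_le_add
        (roundProb_div_haltRate_le s hxx' hx'x hE hγ0 hγ1 hδ hδγ S)
        (pr_pure_none_mul_pow_le s hxx' hx'x hE hγ0 hγ1 hδ hδγ hT S)
    _ ≤ exp (2 * ε + 1) * ((1 - exp (-2)) * Q) + 10 * exp (2 * ε) * δ / γ := by
        have hnum : 11 / 5 ≤ exp 1 - exp (-1) := by linarith [exp_one_gt_d9, exp_neg_one_lt_d9]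
        have hexp : exp (2 * ε + 1) * (1 - exp (-2)) = exp (2 * ε) * (exp 1 - exp (-1)) := by
          rw [mul_sub, mul_sub, mul_one, ← exp_add, ← exp_add, ← exp_add]; ring_nf
        have hE2 : exp (2 * ε) = exp ε ^ 2 := by rw [← exp_nat_mul]; norm_num
        have hA : 1 ≤ exp (2 * ε) := one_le_exp (by linarith)
        have hd : 0 ≤ δ / γ := div_nonneg hδ hγ0.le
        rw [← mul_assoc, hexp, mul_div_assoc, ← hE2]
        nlinarith [mul_le_mul_of_nonneg_right hnum (mul_nonneg (zero_le_one.trans hA) hQ)]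
    _ ≤ _ := by gcongr
end
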